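/- Let S = s_1^{j_1}⋯s_n^{j_n} be a Laurent monomial with integer exponents j_1,…,j_n, and let γ_1,…,γ_n be elements of the Laurent polynomial ring ℤ[s_1^{±1},…,s_n^{±1}]. Then the matrix [[S, Σ_i γ_i t_i],[0,1]] lies in the image of the Magnus representation φ of the free metabelian group M_n if and only if Σ_i γ_i(1 − s_i) = 1 − S. -/

import Mathlib

open MvPolynomial

abbrev LaurentRing (n : ℕ) := AddMonoidAlgebra ℤ (Fin n →₀ ℤ)

noncomputable def sVar (n : ℕ) (i : Fin n) : LaurentRing n :=
  AddMonoidAlgebra.single (Finsupp.single i 1) 1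

noncomputable def sVarInv (n : ℕ) (i : Fin n) : LaurentRing n :=
  AddMonoidAlgebra.single (-Finsupp.single i 1) 1

lemma sVar_mul_sVarInv (n : ℕ) (i : Fin n) : sVar n i * sVarInv n i = 1 := by
  rw [sVar, sVarInv, AddMonoidAlgebra.single_mul_single, add_neg_cancel, one_mul,
    AddMonoidAlgebra.one_def]

abbrev MagnusRing (n : ℕ) := MvPolynomial (Fin n) (LaurentRing n)

noncomputable def magnusUnit (n : ℕ) (i : Fin n) : (Matrix (Fin 2) (Fin 2) (MagnusRing n))ˣ where
  val := !![C (sVar n i), X i; 0, 1]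
  inv := !![C (sVarInv n i), -(C (sVarInv n i) * X i); 0, 1]
  val_inv := by
    have h : (C (sVar n i) * C (sVarInv n i) : MagnusRing n) = 1 := by
      rw [← map_mul, sVar_mul_sVarInv, map_one]
    rw [Matrix.mul_fin_two, Matrix.one_fin_two]
    have e00 : (C (sVar n i) * C (sVarInv n i) + X i * 0 : MagnusRing n) = 1 := by
      linear_combination h
    have e01 : (C (sVar n i) * -(C (sVarInv n i) * X i) + X i * 1 : MagnusRing n) = 0 := by
      linear_combination (-(X i) : MagnusRing n) * h
    rw [e00, e01]
    norm_num
  inv_val := by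
    have h : (C (sVarInv n i) * C (sVar n i) : MagnusRing n) = 1 := by
      rw [← map_mul, mul_comm, sVar_mul_sVarInv, map_one]
    rw [Matrix.mul_fin_two, Matrix.one_fin_two]
    have e00 : (C (sVarInv n i) * C (sVar n i) + -(C (sVarInv n i) * X i) * 0 :
        MagnusRing n) = 1 := by
      linear_combination h
    have e01 : (C (sVarInv n i) * X i + -(C (sVarInv n i) * X i) * 1 : MagnusRing n) = 0 := by
      ring
    rw [e00, e01]
    norm_num

section lowerTriv
variable {R : Type*} [CommRing R]
open scoped commutatorElement

def lowerTriv (R : Type*) [CommRing R] : Subgroup (Matrix (Fin 2) (Fin 2) R)ˣ where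
  carrier := {A | A.val 1 0 = 0 ∧ A.val 1 1 = 1}
  one_mem' := ⟨by simp, by simp⟩
  mul_mem' := by
    rintro A B ⟨ha0, ha1⟩ ⟨hb0, hb1⟩
    constructor <;>
      simp [Units.val_mul, Matrix.mul_apply, Fin.sum_univ_two, ha0, ha1, hb0, hb1]
  inv_mem' := by
    rintro A ⟨h0, h1⟩
    have key : ∀ j, A.inv 1 j = (1 : Matrix (Fin 2) (Fin 2) R) 1 j := by
      intro j
      have h : (A.val * A.inv) 1 j = (1 : Matrix (Fin 2) (Fin 2) R) 1 j := by
        rw [A.val_inv]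
      rwa [Matrix.mul_apply, Fin.sum_univ_two, h0, h1, zero_mul, one_mul, zero_add] at h
    exact ⟨by simpa using key 0, by simpa using key 1⟩

lemma mem_lowerTriv {A : (Matrix (Fin 2) (Fin 2) R)ˣ} :
    A ∈ lowerTriv R ↔ A.val 1 0 = 0 ∧ A.val 1 1 = 1 := Iff.rfl

lemma lowerTriv_mul_apply_zero_zero {A B : (Matrix (Fin 2) (Fin 2) R)ˣ}
    (hB : B ∈ lowerTriv R) :
    (A * B).val 0 0 = A.val 0 0 * B.val 0 0 := by
  obtain ⟨hb0, -⟩ := mem_lowerTriv.mp hB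
  simp [Units.val_mul, Matrix.mul_apply, Fin.sum_univ_two, hb0]

lemma lowerTriv_inv_zero_zero {A : (Matrix (Fin 2) (Fin 2) R)ˣ}
    (hA : A ∈ lowerTriv R) :
    A.val 0 0 * (A⁻¹).val 0 0 = 1 := by
  have h := lowerTriv_mul_apply_zero_zero (A := A) (B := A⁻¹) ((lowerTriv R).inv_mem hA)
  rw [mul_inv_cancel] at h
  simpa using h.symm

def upperUni (R : Type*) [CommRing R] : Subgroup (Matrix (Fin 2) (Fin 2) R)ˣ where
  carrier := {A | A.val 0 0 = 1 ∧ A.val 1 0 = 0 ∧ A.val 1 1 = 1}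
  one_mem' := ⟨by simp, by simp, by simp⟩
  mul_mem' := by
    rintro A B ⟨ha, ha0, ha1⟩ ⟨hb, hb0, hb1⟩
    refine ⟨?_, ?_, ?_⟩ <;>
      simp [Units.val_mul, Matrix.mul_apply, Fin.sum_univ_two, ha, ha0, ha1, hb, hb0, hb1]
  inv_mem' := by
    rintro A ⟨ha, ha0, ha1⟩
    have hmem : A ∈ lowerTriv R := ⟨ha0, ha1⟩
    obtain ⟨h0, h1⟩ := mem_lowerTriv.mp ((lowerTriv R).inv_mem hmem)
    have h := lowerTriv_inv_zero_zero hmem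
    rw [ha, one_mul] at h
    exact ⟨h, h0, h1⟩

lemma mem_upperUni {A : (Matrix (Fin 2) (Fin 2) R)ˣ} :
    A ∈ upperUni R ↔ A.val 0 0 = 1 ∧ A.val 1 0 = 0 ∧ A.val 1 1 = 1 := Iff.rfl

lemma upperUni_comm {A B : (Matrix (Fin 2) (Fin 2) R)ˣ}
    (hA : A ∈ upperUni R) (hB : B ∈ upperUni R) : A * B = B * A := by
  obtain ⟨ha, ha0, ha1⟩ := mem_upperUni.mp hA
  obtain ⟨hb, hb0, hb1⟩ := mem_upperUni.mp hB
  ext : 1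
  rw [Units.val_mul, Units.val_mul, Matrix.eta_fin_two A.val, Matrix.eta_fin_two B.val,
    ha, ha0, ha1, hb, hb0, hb1, Matrix.mul_fin_two, Matrix.mul_fin_two]
  ring_nf

lemma commutator_mem_upperUni {A B : (Matrix (Fin 2) (Fin 2) R)ˣ}
    (hA : A ∈ lowerTriv R) (hB : B ∈ lowerTriv R) : ⁅A, B⁆ ∈ upperUni R := by
  have hAi := (lowerTriv R).inv_mem hA
  have hBi := (lowerTriv R).inv_mem hB
  have hmem : ⁅A, B⁆ ∈ lowerTriv R :=
    Subgroup.mul_mem _ (Subgroup.mul_mem _ (Subgroup.mul_mem _ hA hB) hAi) hBi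
  obtain ⟨hc0, hc1⟩ := mem_lowerTriv.mp hmem
  refine mem_upperUni.mpr ⟨?_, hc0, hc1⟩
  show (A * B * A⁻¹ * B⁻¹).val 0 0 = 1
  rw [lowerTriv_mul_apply_zero_zero hBi, lowerTriv_mul_apply_zero_zero hAi,
    lowerTriv_mul_apply_zero_zero hB]
  have h1 := lowerTriv_inv_zero_zero hA
  have h2 := lowerTriv_inv_zero_zero hB
  calc A.val 0 0 * B.val 0 0 * (A⁻¹).val 0 0 * (B⁻¹).val 0 0
      = (A.val 0 0 * (A⁻¹).val 0 0) * (B.val 0 0 * (B⁻¹).val 0 0) := by ring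
    _ = 1 := by rw [h1, h2, one_mul]

lemma derivedSeries_two_map_eq_one {G : Type*} [Group G]
    (f : G →* (Matrix (Fin 2) (Fin 2) R)ˣ) (hf : ∀ g, f g ∈ lowerTriv R) :
    ∀ x ∈ derivedSeries G 2, f x = 1 := by
  have h1 : derivedSeries G 1 ≤ (upperUni R).comap f := by
    have e : derivedSeries G 1 = ⁅derivedSeries G 0, derivedSeries G 0⁆ :=
      derivedSeries_succ G 0
    rw [e, Subgroup.commutator_le]
    intro g _ h _
    simp only [Subgroup.mem_comap, map_commutatorElement]
    exact commutator_mem_upperUni (hf g) (hf h)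
  have h2 : derivedSeries G 2 ≤ f.ker := by
    have e : derivedSeries G 2 = ⁅derivedSeries G 1, derivedSeries G 1⁆ :=
      derivedSeries_succ G 1
    rw [e, Subgroup.commutator_le]
    intro g hg h hh
    rw [MonoidHom.mem_ker, map_commutatorElement, commutatorElement_eq_one_iff_mul_comm]
    exact upperUni_comm (h1 hg) (h1 hh)
  exact fun x hx => h2 hx

end lowerTriv

abbrev FreeMetabelian (n : ℕ) :=
  FreeGroup (Fin n) ⧸ derivedSeries (FreeGroup (Fin n)) 2

instance (n : ℕ) : (derivedSeries (FreeGroup (Fin n)) 2).Normal :=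
  derivedSeries_normal _ _

def gen (n : ℕ) (i : Fin n) : FreeMetabelian n :=
  QuotientGroup.mk (FreeGroup.of i)

/-- The Magnus representation on the free group. -/
noncomputable def magnusFree (n : ℕ) :
    FreeGroup (Fin n) →* (Matrix (Fin 2) (Fin 2) (MagnusRing n))ˣ :=
  FreeGroup.lift (magnusUnit n)

lemma magnusFree_mem_lowerTriv (n : ℕ) (g : FreeGroup (Fin n)) :
    magnusFree n g ∈ lowerTriv (MagnusRing n) := by
  refine FreeGroup.range_lift_le (s := lowerTriv (MagnusRing n)) ?_ ⟨g, rfl⟩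
  rintro A ⟨i, rfl⟩
  exact ⟨by simp [magnusUnit], by simp [magnusUnit]⟩

/-- The Magnus representation of the free metabelian group. -/
noncomputable def Magnus (n : ℕ) :
    FreeMetabelian n →* (Matrix (Fin 2) (Fin 2) (MagnusRing n))ˣ :=
  QuotientGroup.lift (derivedSeries (FreeGroup (Fin n)) 2) (magnusFree n)
    (derivedSeries_two_map_eq_one (magnusFree n) (magnusFree_mem_lowerTriv n))

/-- The Laurent monomial `s₁^{j₁} ⋯ sₙ^{jₙ}` with exponent vector `j`. -/
noncomputable def sMonomial (n : ℕ) (j : Fin n →₀ ℤ) : LaurentRing n :=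
  AddMonoidAlgebra.single j 1

/-!
Every `φ(g)` has the form `[[a, ∑ γᵢ tᵢ], [0, 1]]` with `a` a unit and `∑ γᵢ (1 - sᵢ) = 1 - a`,
since these matrices form a subgroup containing the generators; this gives necessity.
Conversely, every monomial `S` is the top-left entry of some `φ(W)`, so after multiplying by
`φ(W)⁻¹` it suffices to realise every translation `[[1, ∑ δᵢ tᵢ], [0, 1]]` with
`∑ δᵢ (1 - sᵢ) = 0`. The realised translations form a `ℤ[s^±]`-submodule (conjugating by `φ(W)`
multiplies by `S`), the commutator `[gᵢ, gₘ]` realises the Koszul relation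
`(1 - sₘ) tᵢ - (1 - sᵢ) tₘ`, and these relations generate all syzygies of the regular sequence
`1 - s₁, …, 1 - sₙ`.
-/

section AffineUnit

open scoped commutatorElement

variable {R : Type*} [CommRing R]

def affineUnit (a : Rˣ) (b : R) : (Matrix (Fin 2) (Fin 2) R)ˣ where
  val := !![(a : R), b; 0, 1]
  inv := !![(a⁻¹ : Rˣ), -(↑a⁻¹ * b); 0, 1]
  val_inv := by simp [Matrix.one_fin_two]
  inv_val := by simp [Matrix.one_fin_two]

lemma affineUnit_val_eq_iff {a : Rˣ} {b c d : R} :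
    (affineUnit a b : Matrix (Fin 2) (Fin 2) R) = !![c, d; 0, 1] ↔ ↑a = c ∧ b = d := by
  simp [affineUnit]

lemma affineUnit_one_zero : affineUnit (1 : Rˣ) (0 : R) = 1 := by
  ext : 1
  simp [affineUnit, Matrix.one_fin_two]

lemma affineUnit_mul (a a' : Rˣ) (b b' : R) :
    affineUnit a b * affineUnit a' b' = affineUnit (a * a') (a * b' + b) := by
  ext : 1
  simp [affineUnit]

lemma affineUnit_inv (a : Rˣ) (b : R) : (affineUnit a b)⁻¹ = affineUnit a⁻¹ (-(↑a⁻¹ * b)) := by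
  refine inv_eq_of_mul_eq_one_right ?_
  rw [affineUnit_mul, mul_inv_cancel, mul_neg, ← mul_assoc, Units.mul_inv, one_mul, neg_add_cancel,
    affineUnit_one_zero]

lemma affineUnit_mul_affineUnit_one_mul_inv (a : Rˣ) (b u : R) :
    affineUnit a b * affineUnit 1 u * (affineUnit a b)⁻¹ = affineUnit 1 (a * u) := by
  rw [affineUnit_inv, affineUnit_mul, affineUnit_mul, mul_one, mul_inv_cancel]
  congr 1
  linear_combination (-b) * a.mul_inv

lemma commutatorElement_affineUnit (a a' : Rˣ) (b b' : R) :
    ⁅affineUnit a b, affineUnit a' b'⁆ = affineUnit 1 ((1 - a') * b - (1 - a) * b') := by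
  rw [commutatorElement_def, affineUnit_inv, affineUnit_inv, affineUnit_mul, affineUnit_mul,
    affineUnit_mul]
  congr 1
  · rw [mul_right_comm a, mul_inv_cancel, one_mul, mul_inv_cancel]
  · push_cast
    linear_combination (-(a' * b) - b' * a' * ↑a'⁻¹) * a.mul_inv - b' * a'.mul_inv

end AffineUnit

section Koszul

variable {R ι : Type*} [CommRing R] [DecidableEq ι]

def koszulRel (x : ι → R) (i m : ι) : ι → R :=
  Pi.single i (x m) - Pi.single m (x i)

variable [Fintype ι]

lemma sum_koszulRel_mul (x : ι → R) (i m : ι) : ∑ k, koszulRel x i m k * x k = 0 := by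
  simp only [koszulRel, Pi.sub_apply, Pi.single_apply, sub_mul, ite_mul, zero_mul,
    Finset.sum_sub_distrib, Finset.sum_ite_eq', Finset.mem_univ, ↓reduceIte]
  ring

lemma sum_smul_koszulRel_apply_of_ne (x c : ι → R) {m k : ι} (hk : k ≠ m) :
    (∑ i, c i • koszulRel x i m) k = c k * x m := by
  simp [koszulRel, Finset.sum_apply, Pi.single_apply, hk]

lemma apply_apply_eq_of_dvd_sub {f : R →+* R} {y : R} (hy : f y = 0) (hdvd : ∀ a, y ∣ a - f a)
    (a : R) : f (f a) = f a := by
  obtain ⟨c, hc⟩ := hdvd a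
  have := congrArg f hc
  rw [map_sub, map_mul, hy, zero_mul, sub_eq_zero] at this
  exact this.symm

lemma apply_eq_zero_of_sum_mul_eq_zero {x δ : ι → R} {m : ι} (f : R →+* R)
    (hfm : f (x m) = 0) (hf : ∀ k ≠ m, f (x k) = x k) (hreg : x m ∈ nonZeroDivisors R)
    (hδ : ∑ k, δ k * x k = 0) (hfix : ∀ k ≠ m, f (δ k) = δ k) : δ m = 0 := by
  have hterm : ∀ k, f (δ k * x k) = δ k * x k - if k = m then δ m * x m else 0 := by
    intro k
    by_cases hk : k = m
    · subst hk; simp [hfm]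
    · simp [hk, hf k hk, hfix k hk]
  have h := congrArg f hδ
  rw [map_sum, map_zero, Finset.sum_congr rfl fun k _ => hterm k, Finset.sum_sub_distrib, hδ,
    Finset.sum_ite_eq', if_pos (Finset.mem_univ m), zero_sub, neg_eq_zero] at h
  exact (mul_right_mem_nonZeroDivisors_eq_zero_iff hreg).mp h

/-- Induction on the support of `δ`: subtracting `∑ i, c i • koszulRel x i m` replaces each
`δ i` (`i ≠ m`) by `π m (δ i)`, and then applying `π m` to the relation kills the `m`-th entry. -/
theorem mem_span_koszulRel (x : ι → R) (π : ι → R →+* R) (hπ_self : ∀ m, π m (x m) = 0)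
    (hπ_ne : ∀ m k, k ≠ m → π m (x k) = x k) (hdvd : ∀ m a, x m ∣ a - π m a)
    (hreg : ∀ m, x m ∈ nonZeroDivisors R) {δ : ι → R} (hδ : ∑ k, δ k * x k = 0) :
    δ ∈ Submodule.span R (Set.range fun p : ι × ι => koszulRel x p.1 p.2) := by
  set K := Submodule.span R (Set.range fun p : ι × ι => koszulRel x p.1 p.2)
  suffices ∀ A : Finset ι, ∀ δ : ι → R, (∀ k ∉ A, δ k = 0) → ∑ k, δ k * x k = 0 → δ ∈ K from
    this Finset.univ δ (fun k hk => absurd (Finset.mem_univ k) hk) hδ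
  intro A
  induction A using Finset.induction_on with
  | empty =>
    intro δ hδ0 _
    rw [show δ = 0 from funext fun k => hδ0 k (Finset.notMem_empty k)]
    exact zero_mem K
  | insert m B _ ih =>
    intro δ hsupp hδ
    choose c hc using fun k => hdvd m (δ k)
    set δ' := δ - ∑ i, c i • koszulRel x i m
    have hδ'_ne : ∀ k ≠ m, δ' k = π m (δ k) := fun k hk => by
      rw [show δ' k = δ k - _ from rfl, sum_smul_koszulRel_apply_of_ne x c hk, mul_comm, ← hc,
        sub_sub_cancel]
    have hδ'_rel : ∑ k, δ' k * x k = 0 := by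
      simp only [δ', Pi.sub_apply, Finset.sum_apply, Pi.smul_apply, smul_eq_mul, sub_mul,
        Finset.sum_sub_distrib, hδ, Finset.sum_mul, mul_assoc]
      rw [Finset.sum_comm]
      simp [← Finset.mul_sum, sum_koszulRel_mul]
    have hδ'_m : δ' m = 0 :=
      apply_eq_zero_of_sum_mul_eq_zero (π m) (hπ_self m) (hπ_ne m) (hreg m) hδ'_rel
        fun k hk => by rw [hδ'_ne k hk, apply_apply_eq_of_dvd_sub (hπ_self m) (hdvd m)]
    have hδ'_mem : δ' ∈ K := by
      refine ih δ' (fun k hk => ?_) hδ'_rel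
      by_cases hkm : k = m
      · rw [hkm, hδ'_m]
      · rw [hδ'_ne k hkm, hsupp k (by simp [hkm, hk]), map_zero]
    have hsum_mem : ∑ i, c i • koszulRel x i m ∈ K :=
      Submodule.sum_mem K fun i _ => K.smul_mem _ (Submodule.subset_span ⟨(i, m), rfl⟩)
    simpa [δ'] using add_mem hδ'_mem hsum_mem

end Koszul

section Laurent

variable (n : ℕ)

lemma sMonomial_add (a b : Fin n →₀ ℤ) :
    sMonomial n (a + b) = sMonomial n a * sMonomial n b := by
  rw [sMonomial, sMonomial, sMonomial, AddMonoidAlgebra.single_mul_single, one_mul]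

lemma sMonomial_zero : sMonomial n 0 = 1 :=
  rfl

/-- The substitution `s_m ↦ 1`. -/
noncomputable def killVar (m : Fin n) : LaurentRing n →+* LaurentRing n :=
  AddMonoidAlgebra.mapDomainRingHom ℤ (Finsupp.eraseAddHom m)

lemma killVar_sVar_self (m : Fin n) : killVar n m (sVar n m) = 1 := by
  simp [killVar, sVar, AddMonoidAlgebra.mapDomainRingHom, AddMonoidAlgebra.one_def]

lemma killVar_sVar_of_ne {m k : Fin n} (hk : k ≠ m) : killVar n m (sVar n k) = sVar n k := by
  simp [killVar, sVar, AddMonoidAlgebra.mapDomainRingHom, Finsupp.erase_single_ne hk.symm]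

lemma one_sub_sVar_dvd_sub_killVar (m : Fin n) (a : LaurentRing n) :
    1 - sVar n m ∣ a - killVar n m a := by
  rw [← Ideal.mem_span_singleton, ← Ideal.Quotient.eq, ← RingHom.comp_apply]
  congr 1
  refine AddMonoidAlgebra.ringHom_ext' (RingHom.ext_int _ _) (Finsupp.mulHom_ext' fun k => ?_)
  refine MonoidHom.ext_mint ?_
  change Ideal.Quotient.mk (Ideal.span {1 - sVar n m}) (sVar n k) =
    Ideal.Quotient.mk _ (killVar n m (sVar n k))
  by_cases hk : k = m
  · rw [hk, killVar_sVar_self]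
    refine Ideal.Quotient.eq.mpr ?_
    simpa using neg_mem (Ideal.mem_span_singleton_self (1 - sVar n m))
  · rw [killVar_sVar_of_ne n hk]

lemma one_sub_sVar_mem_nonZeroDivisors (m : Fin n) :
    1 - sVar n m ∈ nonZeroDivisors (LaurentRing n) := by
  refine mem_nonZeroDivisors_of_ne_zero (sub_ne_zero.mpr fun h => ?_)
  have :=
    AddMonoidAlgebra.single_left_injective one_ne_zero (h.symm.trans AddMonoidAlgebra.one_def)
  simp at this

end Laurent

section Magnus

open scoped commutatorElement

variable (n : ℕ)

noncomputable def tSum : (Fin n → LaurentRing n) →ₗ[LaurentRing n] MagnusRing n :=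
  Fintype.linearCombination (LaurentRing n) X

noncomputable def foxForm : (Fin n → LaurentRing n) →ₗ[LaurentRing n] LaurentRing n :=
  Fintype.linearCombination (LaurentRing n) fun i => 1 - sVar n i

lemma tSum_apply (γ : Fin n → LaurentRing n) : tSum n γ = ∑ i, C (γ i) * X i := by
  simp [tSum, Fintype.linearCombination_apply, smul_eq_C_mul]

lemma foxForm_apply (γ : Fin n → LaurentRing n) :
    foxForm n γ = ∑ i, γ i * (1 - sVar n i) := by
  simp [foxForm, Fintype.linearCombination_apply]

lemma tSum_injective : Function.Injective (tSum n) :=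
  linearIndependent_iff_injective_fintypeLinearCombination.mp (linearIndependent_X _ _)

lemma C_mul_tSum (a : LaurentRing n) (γ : Fin n → LaurentRing n) :
    C a * tSum n γ = tSum n (a • γ) := by
  rw [map_smul, smul_eq_C_mul]

/-- The `γ i` are the Fox derivatives of a word and `foxForm n γ = 1 - a` is the fundamental
formula of Fox calculus. -/
noncomputable def foxSubgroup : Subgroup (Matrix (Fin 2) (Fin 2) (MagnusRing n))ˣ where
  carrier := {A | ∃ (a : (LaurentRing n)ˣ) (γ : Fin n → LaurentRing n),
    A = affineUnit (Units.map C.toMonoidHom a) (tSum n γ) ∧ foxForm n γ = 1 - a}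
  one_mem' := ⟨1, 0, by rw [map_one, map_zero, affineUnit_one_zero], by simp⟩
  mul_mem' := by
    rintro _ _ ⟨a, γ, rfl, hγ⟩ ⟨b, δ, rfl, hδ⟩
    refine ⟨a * b, (a : LaurentRing n) • δ + γ, ?_, ?_⟩
    · rw [affineUnit_mul, map_mul, map_add, ← C_mul_tSum]
      rfl
    · rw [map_add, map_smul, hγ, hδ, smul_eq_mul, Units.val_mul]
      ring
  inv_mem' := by
    rintro _ ⟨a, γ, rfl, hγ⟩
    refine ⟨a⁻¹, -(((a⁻¹ : (LaurentRing n)ˣ) : LaurentRing n) • γ), ?_, ?_⟩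
    · rw [affineUnit_inv, map_neg, ← C_mul_tSum, map_inv]
      rfl
    · rw [map_neg, map_smul, hγ, smul_eq_mul]
      linear_combination a.inv_mul

noncomputable def sVarUnit (i : Fin n) : (LaurentRing n)ˣ :=
  ⟨sVar n i, sVarInv n i, sVar_mul_sVarInv n i, (mul_comm _ _).trans (sVar_mul_sVarInv n i)⟩

lemma magnusUnit_eq_affineUnit (i : Fin n) :
    magnusUnit n i = affineUnit (Units.map C.toMonoidHom (sVarUnit n i)) (X i) :=
  Units.ext rfl

lemma tSum_single (i : Fin n) (c : LaurentRing n) : tSum n (Pi.single i c) = C c * X i := by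
  rw [tSum, Fintype.linearCombination_apply_single, smul_eq_C_mul]

lemma magnusUnit_mem_foxSubgroup (i : Fin n) : magnusUnit n i ∈ foxSubgroup n := by
  refine ⟨sVarUnit n i, Pi.single i 1, ?_, ?_⟩
  · rw [magnusUnit_eq_affineUnit, tSum_single, map_one, one_mul]
  · simp [foxForm, Fintype.linearCombination_apply_single, sVarUnit]

lemma Magnus_mem_foxSubgroup (g : FreeMetabelian n) : Magnus n g ∈ foxSubgroup n := by
  obtain ⟨g, rfl⟩ := QuotientGroup.mk_surjective g
  exact FreeGroup.range_lift_le (Set.range_subset_iff.mpr (magnusUnit_mem_foxSubgroup n)) ⟨g, rfl⟩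

lemma Magnus_gen (i : Fin n) : Magnus n (gen n i) = magnusUnit n i :=
  FreeGroup.lift_apply_of

lemma Magnus_mem_lowerTriv (g : FreeMetabelian n) : Magnus n g ∈ lowerTriv (MagnusRing n) := by
  obtain ⟨g, rfl⟩ := QuotientGroup.mk_surjective g
  exact magnusFree_mem_lowerTriv n g

lemma exists_Magnus_val_zero_zero (j : Fin n →₀ ℤ) :
    ∃ g, (Magnus n g).val 0 0 = C (sMonomial n j) := by
  let H : AddSubgroup (Fin n →₀ ℤ) :=
    { carrier := {j | ∃ g, (Magnus n g).val 0 0 = C (sMonomial n j)}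
      zero_mem' := ⟨1, by simp [sMonomial_zero]⟩
      add_mem' := by
        rintro a b ⟨g, hg⟩ ⟨h, hh⟩
        refine ⟨g * h, ?_⟩
        rw [map_mul, lowerTriv_mul_apply_zero_zero (Magnus_mem_lowerTriv n h), hg, hh,
          sMonomial_add, map_mul]
      neg_mem' := by
        rintro a ⟨g, hg⟩
        refine ⟨g⁻¹, ?_⟩
        have hinv := lowerTriv_inv_zero_zero (Magnus_mem_lowerTriv n g)
        have hmon : C (sMonomial n (-a)) * C (sMonomial n a) = (1 : MagnusRing n) := by
          rw [← map_mul, ← sMonomial_add, neg_add_cancel, sMonomial, ← AddMonoidAlgebra.one_def,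
            map_one]
        rw [hg, ← map_inv] at hinv
        exact (left_inv_eq_right_inv hmon hinv).symm }
  suffices j ∈ H from this
  induction j using Finsupp.induction with
  | zero => exact H.zero_mem
  | single_add i k f _ _ ih =>
    refine H.add_mem ?_ ih
    rw [← Finsupp.smul_single_one]
    exact H.zsmul_mem ⟨gen n i, by rw [Magnus_gen]; rfl⟩ k

noncomputable def translationSubgroup : AddSubgroup (MagnusRing n) where
  carrier := {u | ∃ g, Magnus n g = affineUnit 1 u}
  zero_mem' := ⟨1, by rw [map_one, affineUnit_one_zero]⟩
  add_mem' := by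
    rintro u v ⟨g, hg⟩ ⟨h, hh⟩
    refine ⟨g * h, ?_⟩
    rw [map_mul, hg, hh, affineUnit_mul, one_mul, Units.val_one, one_mul, add_comm]
  neg_mem' := by
    rintro u ⟨g, hg⟩
    exact ⟨g⁻¹, by rw [map_inv, hg, affineUnit_inv, inv_one, Units.val_one, one_mul]⟩

lemma C_sMonomial_mul_mem_translationSubgroup (j : Fin n →₀ ℤ) {u : MagnusRing n}
    (hu : u ∈ translationSubgroup n) : C (sMonomial n j) * u ∈ translationSubgroup n := by
  obtain ⟨g, hg⟩ := hu
  obtain ⟨W, hW⟩ := exists_Magnus_val_zero_zero n j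
  obtain ⟨a, γ, hWa, -⟩ := Magnus_mem_foxSubgroup n W
  refine ⟨W * g * W⁻¹, ?_⟩
  rw [map_mul, map_mul, map_inv, hg, hWa, affineUnit_mul_affineUnit_one_mul_inv, ← hW, hWa]
  rfl

noncomputable def translationSubmodule : Submodule (LaurentRing n) (MagnusRing n) where
  toAddSubmonoid := (translationSubgroup n).toAddSubmonoid
  smul_mem' c u hu := by
    change c • u ∈ translationSubgroup n
    induction c using AddMonoidAlgebra.induction_linear with
    | zero => rw [zero_smul]; exact zero_mem _
    | add c c' hc hc' => rw [add_smul]; exact add_mem hc hc'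
    | single j k =>
      rw [← mul_one k, ← smul_eq_mul, ← AddMonoidAlgebra.smul_single, smul_assoc, smul_eq_C_mul]
      exact zsmul_mem (C_sMonomial_mul_mem_translationSubgroup n j hu) k

lemma tSum_koszulRel_mem_translationSubmodule (i m : Fin n) :
    tSum n (koszulRel (fun k => 1 - sVar n k) i m) ∈ translationSubmodule n := by
  refine ⟨⁅gen n i, gen n m⁆, ?_⟩
  rw [map_commutatorElement, Magnus_gen, Magnus_gen, magnusUnit_eq_affineUnit,
    magnusUnit_eq_affineUnit, commutatorElement_affineUnit, koszulRel, map_sub, tSum_single,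
    tSum_single, map_sub, map_sub, map_one]
  rfl

lemma exists_Magnus_eq_affineUnit_one_tSum {δ : Fin n → LaurentRing n} (hδ : foxForm n δ = 0) :
    ∃ g, Magnus n g = affineUnit 1 (tSum n δ) := by
  have hspan := mem_span_koszulRel (fun k => 1 - sVar n k) (killVar n)
    (fun m => by simp [killVar_sVar_self]) (fun m k hk => by simp [killVar_sVar_of_ne n hk])
    (one_sub_sVar_dvd_sub_killVar n) (one_sub_sVar_mem_nonZeroDivisors n)
    ((foxForm_apply n δ).symm.trans hδ)
  refine (Submodule.span_le (p := (translationSubmodule n).comap (tSum n))).mpr ?_ hspan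
  rintro _ ⟨⟨i, m⟩, rfl⟩
  exact tSum_koszulRel_mem_translationSubmodule n i m

end Magnus

/-- A matrix `[[S, Σᵢ γᵢ tᵢ], [0, 1]]`, with `S` a Laurent monomial in the `sᵢ` and the
`γᵢ` Laurent polynomials in the `sᵢ`, lies in the image of the Magnus representation if
and only if `Σᵢ γᵢ (1 - sᵢ) = 1 - S`. -/
theorem magnus_mem_image_iff (n : ℕ) (j : Fin n →₀ ℤ) (γ : Fin n → LaurentRing n) :
    (∃ g : FreeMetabelian n,
        (Magnus n g : Matrix (Fin 2) (Fin 2) (MagnusRing n)) =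
          !![C (sMonomial n j), ∑ i : Fin n, C (γ i) * X i; 0, 1]) ↔
      ∑ i : Fin n, γ i * (1 - sVar n i) = 1 - sMonomial n j := by
  rw [← tSum_apply, ← foxForm_apply]
  constructor
  · rintro ⟨g, hg⟩
    obtain ⟨a, γ', hA, hγ'⟩ := Magnus_mem_foxSubgroup n g
    rw [hA, affineUnit_val_eq_iff] at hg
    rw [← tSum_injective n hg.2, hγ', ← C_injective _ _ hg.1]
  · intro hγ
    obtain ⟨W, hW⟩ := exists_Magnus_val_zero_zero n j
    obtain ⟨a, γ₀, hWa, hγ₀⟩ := Magnus_mem_foxSubgroup n W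
    have ha : (a : LaurentRing n) = sMonomial n j := C_injective _ _ (by rw [← hW, hWa]; rfl)
    obtain ⟨g, hg⟩ := exists_Magnus_eq_affineUnit_one_tSum n
      (δ := ((a⁻¹ : (LaurentRing n)ˣ) : LaurentRing n) • (γ - γ₀))
      (by rw [map_smul, map_sub, hγ, hγ₀, ha, sub_sub_sub_cancel_left, sub_self, smul_zero])
    refine ⟨W * g, ?_⟩
    rw [map_mul, hWa, hg, affineUnit_mul, affineUnit_val_eq_iff, mul_one]
    change C (a : LaurentRing n) = _ ∧ C (a : LaurentRing n) * _ + _ = _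
    rw [ha, C_mul_tSum, smul_smul, ← ha, Units.mul_inv, one_smul, ← map_add, sub_add_cancel]
    exact ⟨rfl, rfl⟩
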